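/- Let A ∈ ℝ^{n×n}, B ∈ ℝ^{n×m} be constant matrices, and let Q : ℝ → ℝ^{n×n}, S : ℝ → ℝ^{n×m}, R : ℝ → ℝ^{m×m}, q : ℝ → ℝⁿ, r : ℝ → ℝᵐ with R(t) invertible for every t. Suppose P : ℝ → ℝ^{n×n}, p : ℝ → ℝⁿ, and x̃ : ℝ → ℝⁿ are differentiable and satisfy, for all t: (i) −P′(t) = Q(t) + AᵀP(t) + P(t)A − (P(t)B + S(t))R(t)⁻¹(BᵀP(t) + S(t)ᵀ); (ii) −p′(t) = q(t) + Aᵀp(t) − (P(t)B + S(t))R(t)⁻¹(Bᵀp(t) + r(t)); (iii) x̃′(t) = (A − B R(t)⁻¹(BᵀP(t) + S(t)ᵀ)) x̃(t) − B R(t)⁻¹(Bᵀp(t) + r(t)). Define λ(t) = P(t)x̃(t) + p(t) and ũ(t) = −R(t)⁻¹(r(t) + Bᵀλ(t) + S(t)ᵀx̃(t)). Then for all t: (a) x̃′(t) = A x̃(t) + B ũ(t); (b) λ is differentiable with −λ′(t) = Q(t)x̃(t) + S(t)ũ(t) + Aᵀλ(t) + q(t); and (c) S(t)ᵀx̃(t)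 + R(t)ũ(t) + Bᵀλ(t) + r(t) = 0. -/

import Mathlib

/-!
Differentiating `λ = P x̃ + p` by the product rule and substituting the two Riccati equations
together with the closed-loop equation `x̃' = A x̃ + B ũ`, the terms `± P A x̃` cancel and the
quadratic Riccati terms collapse to `(P B + S) R⁻¹ (Bᵀ λ + Sᵀ x̃ + r) = -(P B + S) ũ`; what is
left is the costate equation. Stationarity is the definition of `ũ` multiplied by `R`.
-/

open Matrix

theorem HasDerivAt.matrix_mulVec {𝕜 ι κ : Type*} [NontriviallyNormedField 𝕜]
    [Fintype ι] [Fintype κ] {M : 𝕜 → Matrix ι κ 𝕜} {M' : Matrix ι κ 𝕜}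
    {v : 𝕜 → κ → 𝕜} {v' : κ → 𝕜} {t : 𝕜}
    (hM : ∀ i j, HasDerivAt (fun τ => M τ i j) (M' i j) t) (hv : HasDerivAt v v' t) :
    HasDerivAt (fun τ => M τ *ᵥ v τ) (M' *ᵥ v t + M t *ᵥ v') t := by
  refine hasDerivAt_pi.mpr fun i => ?_
  have hsum := HasDerivAt.fun_sum (u := Finset.univ)
    fun j _ => (hM i j).fun_mul (hasDerivAt_pi.mp hv j)
  simpa only [mulVec, dotProduct, Pi.add_apply, Finset.sum_add_distrib] using hsum

section LinearQuadratic

variable {α ι κ : Type*} [Ring α] [Fintype ι] [Fintype κ]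
  (A : Matrix ι ι α) (B : Matrix ι κ α) (Q P : Matrix ι ι α) (S : Matrix ι κ α)
  (Rinv : Matrix κ κ α) (x p q : ι → α) (r : κ → α)

theorem closedLoop_mulVec_eq_feedback :
    (A - B * Rinv * (Bᵀ * P + Sᵀ)) *ᵥ x - (B * Rinv) *ᵥ (Bᵀ *ᵥ p + r)
      = A *ᵥ x + B *ᵥ -(Rinv *ᵥ (r + Bᵀ *ᵥ (P *ᵥ x + p) + Sᵀ *ᵥ x)) := by
  simp only [sub_mulVec, add_mulVec, mulVec_add, mulVec_neg, ← mulVec_mulVec]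
  abel

theorem riccati_mulVec_add_eq_costate :
    let u := -(Rinv *ᵥ (r + Bᵀ *ᵥ (P *ᵥ x + p) + Sᵀ *ᵥ x))
    (-(Q + Aᵀ * P + P * A - (P * B + S) * Rinv * (Bᵀ * P + Sᵀ))) *ᵥ x
        + P *ᵥ (A *ᵥ x + B *ᵥ u)
        + -(q + Aᵀ *ᵥ p - ((P * B + S) * Rinv) *ᵥ (Bᵀ *ᵥ p + r))
      = -(Q *ᵥ x + S *ᵥ u + Aᵀ *ᵥ (P *ᵥ x + p) + q) := by
  simp only [sub_mulVec, add_mulVec, mulVec_add, mulVec_neg, ← mulVec_mulVec,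
    neg_add, neg_sub, neg_neg]
  abel

end LinearQuadratic

/-- Riccati-based construction of the semi-smooth Newton step: if `P`, `p` solve the
differential Riccati equations and `x̃` solves the closed-loop state equation, then
`λ = P x̃ + p` and `ũ = -R⁻¹(r + Bᵀλ + Sᵀx̃)` satisfy the dynamics, the costate
equation, and the stationarity condition of the Newton-step two-point boundary value
problem. (Matrix-valued derivatives are taken entrywise.) -/
theorem riccati_solves_newton_step (n m : ℕ)
    (A : Matrix (Fin n) (Fin n) ℝ) (B : Matrix (Fin n) (Fin m) ℝ)
    (Q : ℝ → Matrix (Fin n) (Fin n) ℝ) (S : ℝ → Matrix (Fin n) (Fin m) ℝ)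
    (R : ℝ → Matrix (Fin m) (Fin m) ℝ)
    (q : ℝ → Fin n → ℝ) (r : ℝ → Fin m → ℝ)
    (hR : ∀ t, IsUnit (R t))
    (P : ℝ → Matrix (Fin n) (Fin n) ℝ) (p : ℝ → Fin n → ℝ) (xt : ℝ → Fin n → ℝ)
    (hP : ∀ t, ∀ i j, HasDerivAt (fun τ => P τ i j)
      ((-(Q t + Aᵀ * P t + P t * A - (P t * B + S t) * (R t)⁻¹ * (Bᵀ * P t + (S t)ᵀ))) i j) t)
    (hp : ∀ t, HasDerivAt p
      (-(q t + Aᵀ.mulVec (p t) - ((P t * B + S t) * (R t)⁻¹).mulVec (Bᵀ.mulVec (p t) + r t))) t)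
    (hxt : ∀ t, HasDerivAt xt
      ((A - B * (R t)⁻¹ * (Bᵀ * P t + (S t)ᵀ)).mulVec (xt t)
        - (B * (R t)⁻¹).mulVec (Bᵀ.mulVec (p t) + r t)) t)
    (lam : ℝ → Fin n → ℝ) (hlam : ∀ t, lam t = (P t).mulVec (xt t) + p t)
    (ut : ℝ → Fin m → ℝ)
    (hu : ∀ t, ut t = -(R t)⁻¹.mulVec (r t + Bᵀ.mulVec (lam t) + (S t)ᵀ.mulVec (xt t))) :
    (∀ t, HasDerivAt xt (A.mulVec (xt t) + B.mulVec (ut t)) t) ∧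
    (∀ t, HasDerivAt lam
      (-((Q t).mulVec (xt t) + (S t).mulVec (ut t) + Aᵀ.mulVec (lam t) + q t)) t) ∧
    (∀ t, (S t)ᵀ.mulVec (xt t) + (R t).mulVec (ut t) + Bᵀ.mulVec (lam t) + r t = 0) := by
  obtain rfl : lam = fun t => P t *ᵥ xt t + p t := funext hlam
  obtain rfl : ut = fun t => -((R t)⁻¹ *ᵥ (r t + Bᵀ *ᵥ (P t *ᵥ xt t + p t) + (S t)ᵀ *ᵥ xt t)) :=
    funext hu
  have hdyn : ∀ t, HasDerivAt xt (A *ᵥ xt t + B *ᵥ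
      -((R t)⁻¹ *ᵥ (r t + Bᵀ *ᵥ (P t *ᵥ xt t + p t) + (S t)ᵀ *ᵥ xt t))) t := fun t =>
    closedLoop_mulVec_eq_feedback A B (P t) (S t) (R t)⁻¹ (xt t) (p t) (r t) ▸ hxt t
  refine ⟨hdyn, fun t => ?_, fun t => ?_⟩
  · exact riccati_mulVec_add_eq_costate A B (Q t) (P t) (S t) (R t)⁻¹ (xt t) (p t) (q t) (r t) ▸
      ((HasDerivAt.matrix_mulVec (hP t) (hdyn t)).add (hp t))
  · rw [mulVec_neg, mulVec_mulVec, mul_nonsing_inv _ ((isUnit_iff_isUnit_det _).mp (hR t)),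
      one_mulVec]
    abel
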